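/- arXiv:1707.03201 — 5 statements merged into one kernel-verified Lean document; each statement's English description precedes it below -/
import Mathlib

section
/- Let u ∈ H¹₀(Ω) solve the weak formulation of -div(A∇u)=f and let v ∈ H¹₀(Ω), y ∈ H(Ω, div) be arbitrary. Then ∫_Ω A∇(u-v)·∇(u-v) dx = (f + div y, u - v)_Ω + (y - A∇v, ∇(u-v))_Ω. -/
open RealInnerProductSpace

/-- Error identity with auxiliary flux: for the weak solution `u` of `-div(A∇u)=f`,
any `v ∈ H¹₀(Ω)` and any `y ∈ H(Ω,div)` (with weak divergence `divy`),
`(A∇(u-v), ∇(u-v))_Ω = (f + div y, u-v)_Ω + (y - A∇v, ∇(u-v))_Ω`. -/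
theorem error_identity_with_flux
    {V L Ld : Type*}
    [NormedAddCommGroup L] [InnerProductSpace ℝ L]
    [NormedAddCommGroup Ld] [InnerProductSpace ℝ Ld]
    [AddCommGroup V] [Module ℝ V]
    (ι : V →ₗ[ℝ] L) (grad : V →ₗ[ℝ] Ld) (A : Ld →ₗ[ℝ] Ld)
    (f : L) (u v : V) (y : Ld) (divy : L) (ν ν' : ℝ)
    (hν : 0 < ν) (hνν' : ν ≤ ν')
    (hsym : ∀ σ τ : Ld, ⟪A σ, τ⟫ = ⟪σ, A τ⟫)
    (hell : ∀ τ : Ld, ν * ‖τ‖ ^ 2 ≤ ⟪A τ, τ⟫ ∧ ⟪A τ, τ⟫ ≤ ν' * ‖τ‖ ^ 2)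
    (hweak : ∀ η : V, ⟪A (grad u), grad η⟫ = ⟪f, ι η⟫)
    (hIBP : ∀ w : V, ⟪divy, ι w⟫ + ⟪y, grad w⟫ = 0) :
    ⟪A (grad (u - v)), grad (u - v)⟫
      = ⟪f + divy, ι (u - v)⟫ + ⟪y - A (grad v), grad (u - v)⟫ := by
  set e := u - v with he
  have h1 : ⟪A (grad e), grad e⟫ = ⟪f, ι e⟫ - ⟪A (grad v), grad e⟫ := by
    have : grad e = grad u - grad v := by simp [he]
    rw [show A (grad e) = A (grad u) - A (grad v) by rw [this, map_sub],
      inner_sub_left, hweak e]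
  have h2 : ⟪divy, ι e⟫ = -⟪y, grad e⟫ := by linarith [hIBP e]
  rw [h1, inner_add_left, inner_sub_left, h2]
  ring
end

section
/- For any v ∈ H¹₀(Ω), y ∈ H(Ω, div), and any β > 0, the energy error e = u - v satisfies ‖∇e‖²_{A,Ω} ≤ (1+β)‖y - A∇v‖²_{A⁻¹,Ω} + (1 + 1/β)(C_F²/ν̲)‖f + div y‖²_Ω, where u is the weak solution of -div(A∇u)=f and C_F is the Friedrichs constant of Ω. -/
open RealInnerProductSpace

set_option maxHeartbeats 1000000 in
/-- Functional majorant (Theorem 1a): for any `v ∈ H¹₀(Ω)`, `y ∈ H(Ω,div)`, `β > 0`,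
`‖∇e‖²_{A,Ω} ≤ (1+β)‖y - A∇v‖²_{A⁻¹,Ω} + (1 + 1/β)(C_F²/ν̲)‖f + div y‖²_Ω`. -/
theorem majorant_upper_bound
    {V L Ld : Type*}
    [NormedAddCommGroup L] [InnerProductSpace ℝ L]
    [NormedAddCommGroup Ld] [InnerProductSpace ℝ Ld]
    [AddCommGroup V] [Module ℝ V]
    (ι : V →ₗ[ℝ] L) (grad : V →ₗ[ℝ] Ld) (A Ainv : Ld →ₗ[ℝ] Ld)
    (f : L) (u v : V) (y : Ld) (divy : L) (ν ν' CF β : ℝ)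
    (hν : 0 < ν) (hνν' : ν ≤ ν') (hCF : 0 < CF) (hβ : 0 < β)
    (hsym : ∀ σ τ : Ld, ⟪A σ, τ⟫ = ⟪σ, A τ⟫)
    (hell : ∀ τ : Ld, ν * ‖τ‖ ^ 2 ≤ ⟪A τ, τ⟫ ∧ ⟪A τ, τ⟫ ≤ ν' * ‖τ‖ ^ 2)
    (hAinv : ∀ τ : Ld, A (Ainv τ) = τ)
    (hFried : ∀ w : V, ‖ι w‖ ≤ CF * ‖grad w‖)
    (hweak : ∀ η : V, ⟪A (grad u), grad η⟫ = ⟪f, ι η⟫)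
    (hIBP : ∀ w : V, ⟪divy, ι w⟫ + ⟪y, grad w⟫ = 0) :
    ⟪A (grad (u - v)), grad (u - v)⟫
      ≤ (1 + β) * ⟪Ainv (y - A (grad v)), y - A (grad v)⟫
        + (1 + 1 / β) * (CF ^ 2 / ν) * ‖f + divy‖ ^ 2 := by
  have hA_nonneg : ∀ τ : Ld, 0 ≤ ⟪A τ, τ⟫ := fun τ =>
    le_trans (by positivity) (hell τ).1
  -- Cauchy–Schwarz for the A-inner product
  have hCS : ∀ σ τ : Ld, ⟪A σ, τ⟫ ^ 2 ≤ ⟪A σ, σ⟫ * ⟪A τ, τ⟫ := by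
    intro σ τ
    rcases eq_or_lt_of_le (hA_nonneg τ) with hc | hc
    · have hτ : τ = 0 := by
        have h1 := (hell τ).1
        have hn : ‖τ‖ = 0 := by
          by_contra hne
          have hpos : 0 < ‖τ‖ := (norm_nonneg τ).lt_of_ne (Ne.symm hne)
          nlinarith [h1, mul_pos hν (pow_pos hpos 2)]
        simpa using hn
      simp [hτ]
    · have hsymm : ⟪A τ, σ⟫ = ⟪A σ, τ⟫ := by
        rw [hsym τ σ, real_inner_comm]
      have h := hA_nonneg (⟪A τ, τ⟫ • σ - ⟪A σ, τ⟫ • τ)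
      simp only [map_sub, map_smul, inner_sub_left, inner_sub_right,
        real_inner_smul_left, real_inner_smul_right, smul_eq_mul] at h
      simp only [hsymm] at h
      nlinarith [h, hc]
  set e := u - v with he
  have hge : grad e = grad u - grad v := map_sub grad u v
  set τ := y - A (grad v) with hτdef
  set M := ⟪A (grad e), grad e⟫ with hM
  set N := ⟪Ainv τ, τ⟫ with hN
  set F := ‖f + divy‖ with hF
  -- N ≥ 0
  have hNval : ⟪A (Ainv τ), Ainv τ⟫ = N := by
    rw [hAinv, real_inner_comm]
  have hN_nonneg : 0 ≤ N := hNval ▸ hA_nonneg (Ainv τ)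
  have hM_nonneg : 0 ≤ M := hA_nonneg _
  -- the key identity
  have hid : M = ⟪f + divy, ι e⟫ + ⟪τ, grad e⟫ := by
    have h1 := hweak e
    have h2 := hIBP e
    have h3 : M = ⟪A (grad u), grad e⟫ - ⟪A (grad v), grad e⟫ := by
      rw [hM, hge, map_sub, inner_sub_left]
    rw [h3, h1, hτdef]
    simp only [inner_add_left, inner_sub_left]
    linarith
  -- bound the two terms
  set X := Real.sqrt M with hX
  have hX0 : 0 ≤ X := Real.sqrt_nonneg M
  have hXX : X ^ 2 = M := Real.sq_sqrt hM_nonneg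
  have hsν : 0 < Real.sqrt ν := Real.sqrt_pos.mpr hν
  have hg : Real.sqrt ν * ‖grad e‖ ≤ X := by
    have h1 := (hell (grad e)).1
    have hsq : (Real.sqrt ν * ‖grad e‖) ^ 2 ≤ X ^ 2 := by
      rw [hXX, mul_pow, Real.sq_sqrt hν.le]; exact h1
    exact (pow_le_pow_iff_left₀ (by positivity) hX0 two_ne_zero).mp hsq
  set R := Real.sqrt N with hR
  have hR0 : 0 ≤ R := Real.sqrt_nonneg N
  have hRR : R ^ 2 = N := Real.sq_sqrt hN_nonneg
  -- second term bound: ⟪τ, grad e⟫ ≤ R * X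
  have hT2 : ⟪τ, grad e⟫ ≤ R * X := by
    have h1 : ⟪τ, grad e⟫ = ⟪A (Ainv τ), grad e⟫ := by rw [hAinv]
    have h2 := hCS (Ainv τ) (grad e)
    rw [hNval] at h2
    have h3 : ⟪A (Ainv τ), grad e⟫ ≤ Real.sqrt (N * M) := by
      have := Real.sqrt_le_sqrt h2
      calc ⟪A (Ainv τ), grad e⟫ ≤ |⟪A (Ainv τ), grad e⟫| := le_abs_self _
        _ = Real.sqrt (⟪A (Ainv τ), grad e⟫ ^ 2) := (Real.sqrt_sq_eq_abs _).symm
        _ ≤ Real.sqrt (N * M) := this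
    rw [h1]
    calc ⟪A (Ainv τ), grad e⟫ ≤ Real.sqrt (N * M) := h3
      _ = R * X := Real.sqrt_mul hN_nonneg M
  -- first term bound
  set S := CF * F / Real.sqrt ν with hS
  have hS0 : 0 ≤ S := by positivity
  have hT1 : ⟪f + divy, ι e⟫ ≤ S * X := by
    calc ⟪f + divy, ι e⟫ ≤ ‖f + divy‖ * ‖ι e‖ := real_inner_le_norm _ _
      _ ≤ F * (CF * ‖grad e‖) := by
          exact mul_le_mul_of_nonneg_left (hFried e) (norm_nonneg _)
      _ ≤ S * X := by
          rw [hS]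
          rw [div_mul_eq_mul_div, le_div_iff₀ hsν]
          have := mul_le_mul_of_nonneg_left hg (by positivity : (0:ℝ) ≤ F * CF)
          nlinarith [this]
  -- combine : M ≤ (S + R) * X, M = X², hence X ≤ S + R
  have hMle : M ≤ (S + R) * X := by rw [hid]; nlinarith [hT1, hT2]
  have hXle : X ≤ S + R := by
    rcases eq_or_lt_of_le hX0 with h0 | h0
    · linarith [hS0, hR0]
    · have : X * X ≤ (S + R) * X := by rw [← hXX] at hMle; nlinarith [hMle]
      exact le_of_mul_le_mul_right (by nlinarith) h0
  have hSsq : S ^ 2 = CF ^ 2 / ν * F ^ 2 := by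
    rw [hS, div_pow, mul_pow, Real.sq_sqrt hν.le]
    ring
  have hfinal : M ≤ (1 + β) * N + (1 + 1 / β) * S ^ 2 := by
    have h1 : M ≤ (S + R) ^ 2 := by
      rw [← hXX]
      have := mul_le_mul hXle hXle hX0 (by linarith)
      nlinarith [this]
    have hβ1 : β * (1 / β) = 1 := mul_one_div_cancel (ne_of_gt hβ)
    have key : (S + R) ^ 2 ≤ (1 + β) * R ^ 2 + (1 + 1 / β) * S ^ 2 := by
      nlinarith [sq_nonneg (β * R - S), hβ, hβ1, sq_nonneg R, sq_nonneg S]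
    rw [← hRR]
    linarith [h1, key]
  calc M ≤ (1 + β) * N + (1 + 1 / β) * S ^ 2 := hfinal
    _ = (1 + β) * N + (1 + 1 / β) * (CF ^ 2 / ν) * F ^ 2 := by rw [hSsq]; ring
end

section
/- Let e := u - v for the weak solution u of -Δu = f and any v ∈ H¹₀(Ω), and let y ∈ H(Ω, div). Then ‖∇e‖²_Ω ≤ C_F‖f + div y‖_Ω ‖∇e‖_Ω + ‖y - ∇v‖_Ω ‖∇e‖_Ω, hence ‖∇e‖_Ω ≤ C_F‖f + div y‖_Ω + ‖y - ∇v‖_Ω. -/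
open RealInnerProductSpace

/-- Basic estimate before Young's inequality: with `e := u - v` for the weak solution `u`
of `-Δu = f`, any `v ∈ H¹₀(Ω)`, `y ∈ H(Ω,div)`:
`‖∇e‖²_Ω ≤ C_F‖f + div y‖_Ω ‖∇e‖_Ω + ‖y - ∇v‖_Ω ‖∇e‖_Ω`, hence
`‖∇e‖_Ω ≤ C_F‖f + div y‖_Ω + ‖y - ∇v‖_Ω`. -/
theorem pre_young_estimate
    {V L Ld : Type*}
    [NormedAddCommGroup L] [InnerProductSpace ℝ L]
    [NormedAddCommGroup Ld] [InnerProductSpace ℝ Ld]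
    [AddCommGroup V] [Module ℝ V]
    (ι : V →ₗ[ℝ] L) (grad : V →ₗ[ℝ] Ld)
    (f : L) (u v : V) (y : Ld) (divy : L) (CF : ℝ)
    (hCF : 0 < CF)
    (hFried : ∀ w : V, ‖ι w‖ ≤ CF * ‖grad w‖)
    (hweak : ∀ η : V, ⟪grad u, grad η⟫ = ⟪f, ι η⟫)
    (hIBP : ∀ w : V, ⟪divy, ι w⟫ + ⟪y, grad w⟫ = 0) :
    (‖grad (u - v)‖ ^ 2
      ≤ CF * ‖f + divy‖ * ‖grad (u - v)‖ + ‖y - grad v‖ * ‖grad (u - v)‖) ∧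
    ‖grad (u - v)‖ ≤ CF * ‖f + divy‖ + ‖y - grad v‖ := by
  set e := u - v with he
  have key : ‖grad e‖ ^ 2 = ⟪f + divy, ι e⟫ + ⟪y - grad v, grad e⟫ := by
    have h1 : ⟪grad e, grad e⟫ = ⟪grad u, grad e⟫ - ⟪grad v, grad e⟫ := by
      rw [he, map_sub, inner_sub_left]
    have h2 := hweak e
    have h3 := hIBP e
    rw [← real_inner_self_eq_norm_sq, h1, h2, inner_add_left, inner_sub_left]
    linarith
  have hCS1 : ⟪f + divy, ι e⟫ ≤ ‖f + divy‖ * ‖ι e‖ := real_inner_le_norm _ _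
  have hCS2 : ⟪y - grad v, grad e⟫ ≤ ‖y - grad v‖ * ‖grad e‖ := real_inner_le_norm _ _
  have hF := hFried e
  have h4 : ‖f + divy‖ * ‖ι e‖ ≤ ‖f + divy‖ * (CF * ‖grad e‖) :=
    mul_le_mul_of_nonneg_left hF (norm_nonneg _)
  have hfirst : ‖grad e‖ ^ 2 ≤ CF * ‖f + divy‖ * ‖grad e‖ + ‖y - grad v‖ * ‖grad e‖ := by
    rw [key]; nlinarith
  refine ⟨hfirst, ?_⟩
  rcases eq_or_lt_of_le (norm_nonneg (grad e)) with h0 | h0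
  · rw [← h0]
    positivity
  · have := (mul_le_mul_iff_of_pos_right h0).mp (by nlinarith [hfirst] : ‖grad e‖ * ‖grad e‖ ≤ (CF * ‖f + divy‖ + ‖y - grad v‖) * ‖grad e‖)
    exact this
end

section
/- The minorant can be computed without knowing u: for v, w ∈ H¹₀(Ω), 2(J(w) - J(v)) = 2(f, w - v)_Ω - ‖∇w‖²_Ω + ‖∇v‖²_Ω, and this quantity is bounded above by ‖∇(u - v)‖²_Ω for the weak solution u of -Δu = f. -/
open RealInnerProductSpace

/-- Computable form of the minorant: for `v, w ∈ H¹₀(Ω)`,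
`2(J(w) - J(v)) = 2(f, w-v)_Ω - ‖∇w‖²_Ω + ‖∇v‖²_Ω`, and this quantity is bounded
above by `‖∇(u - v)‖²_Ω` for the weak solution `u` of `-Δu = f`. -/
theorem minorant_computable
    {V L Ld : Type*}
    [NormedAddCommGroup L] [InnerProductSpace ℝ L]
    [NormedAddCommGroup Ld] [InnerProductSpace ℝ Ld]
    [AddCommGroup V] [Module ℝ V]
    (ι : V →ₗ[ℝ] L) (grad : V →ₗ[ℝ] Ld)
    (f : L) (u : V)
    (hweak : ∀ η : V, ⟪grad u, grad η⟫ = ⟪f, ι η⟫)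
    (v w : V) :
    2 * ((⟪f, ι w⟫ - (1 / 2) * ‖grad w‖ ^ 2)
        - (⟪f, ι v⟫ - (1 / 2) * ‖grad v‖ ^ 2))
      = 2 * ⟪f, ι (w - v)⟫ - ‖grad w‖ ^ 2 + ‖grad v‖ ^ 2 ∧
    2 * ((⟪f, ι w⟫ - (1 / 2) * ‖grad w‖ ^ 2)
        - (⟪f, ι v⟫ - (1 / 2) * ‖grad v‖ ^ 2))
      ≤ ‖grad (u - v)‖ ^ 2 := by
  constructor
  · rw [map_sub, inner_sub_right]; ring
  · have hw := hweak w
    have hv := hweak v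
    have e1 : ‖grad (u - v)‖ ^ 2
        = ‖grad u‖ ^ 2 - 2 * ⟪grad u, grad v⟫ + ‖grad v‖ ^ 2 := by
      rw [map_sub, @norm_sub_sq_real]
    have e2 : ‖grad (u - w)‖ ^ 2
        = ‖grad u‖ ^ 2 - 2 * ⟪grad u, grad w⟫ + ‖grad w‖ ^ 2 := by
      rw [map_sub, @norm_sub_sq_real]
    nlinarith [sq_nonneg ‖grad (u - w)‖]
end

section
/- Two-sided bound consistency: for the weak solution u of -Δu = f and any v, w ∈ H¹₀(Ω), y ∈ H(Ω,div), the minorant never exceeds the majorant: 2(J(w) - J(v)) ≤ (‖y - ∇v‖_Ω + C_F ‖f + div y‖_Ω)², and the true error ‖∇(u-v)‖²_Ω lies in the interval [2(J(w) - J(v)), (‖y - ∇v‖_Ω + C_F‖f + div y‖_Ω)²]. -/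
/-!
The energy `J` is a quadratic functional maximised by the weak solution `u`, and completing
the square gives `2 (J u - J z) = ‖∇(u - z)‖²`; since `J w ≤ J u`, this yields the minorant.
For the majorant, testing the weak equation and the integration-by-parts identity for `y`
with `e = u - v` gives `‖∇e‖² = (f + div y, e) + (y - ∇v, ∇e)`, which Cauchy–Schwarz and
Friedrichs bound by `(‖y - ∇v‖ + C_F ‖f + div y‖) ‖∇e‖`.
-/

open RealInnerProductSpace

section Poisson

variable {V L Ld : Type*}
  [NormedAddCommGroup L] [InnerProductSpace ℝ L]
  [NormedAddCommGroup Ld] [InnerProductSpace ℝ Ld]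
  [AddCommGroup V] [Module ℝ V]
  (ι : V →ₗ[ℝ] L) (grad : V →ₗ[ℝ] Ld) (f : L)

noncomputable def energy (z : V) : ℝ := ⟪f, ι z⟫ - (1 / 2) * ‖grad z‖ ^ 2

variable {ι grad f} {u : V}

theorem two_mul_energy_sub_eq_norm_grad_sub_sq
    (hweak : ∀ η : V, ⟪grad u, grad η⟫ = ⟪f, ι η⟫) (z : V) :
    2 * (energy ι grad f u - energy ι grad f z) = ‖grad (u - z)‖ ^ 2 := by
  have hfu := hweak u
  have hfz := hweak z
  rw [map_sub, norm_sub_sq_real, ← real_inner_self_eq_norm_sq (grad u)]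
  unfold energy
  rw [← hfu, ← hfz, real_inner_self_eq_norm_sq]
  ring

theorem two_mul_energy_sub_le_norm_grad_sub_sq
    (hweak : ∀ η : V, ⟪grad u, grad η⟫ = ⟪f, ι η⟫) (v w : V) :
    2 * (energy ι grad f w - energy ι grad f v) ≤ ‖grad (u - v)‖ ^ 2 := by
  have hv := two_mul_energy_sub_eq_norm_grad_sub_sq hweak v
  have hw := two_mul_energy_sub_eq_norm_grad_sub_sq hweak w
  nlinarith [sq_nonneg ‖grad (u - w)‖]

theorem norm_grad_sub_sq_eq_inner_add_inner
    (hweak : ∀ η : V, ⟪grad u, grad η⟫ = ⟪f, ι η⟫) {y : Ld} {divy : L}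
    (hIBP : ∀ z : V, ⟪divy, ι z⟫ + ⟪y, grad z⟫ = 0) (v : V) :
    ‖grad (u - v)‖ ^ 2 = ⟪f + divy, ι (u - v)⟫ + ⟪y - grad v, grad (u - v)⟫ := by
  have hsplit : ⟪grad (u - v), grad (u - v)⟫
      = ⟪grad u, grad (u - v)⟫ - ⟪grad v, grad (u - v)⟫ := by
    rw [← inner_sub_left, ← map_sub]
  rw [← real_inner_self_eq_norm_sq, hsplit, hweak, inner_add_left, inner_sub_left]
  linear_combination -hIBP (u - v)

theorem norm_grad_sub_sq_le_majorant
    (hweak : ∀ η : V, ⟪grad u, grad η⟫ = ⟪f, ι η⟫) {y : Ld} {divy : L}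
    (hIBP : ∀ z : V, ⟪divy, ι z⟫ + ⟪y, grad z⟫ = 0) {CF : ℝ}
    (hFried : ∀ z : V, ‖ι z‖ ≤ CF * ‖grad z‖) (v : V) :
    ‖grad (u - v)‖ ^ 2 ≤ (‖y - grad v‖ + CF * ‖f + divy‖) ^ 2 := by
  set M := ‖y - grad v‖ + CF * ‖f + divy‖
  set a := ‖grad (u - v)‖
  have hle : a ^ 2 ≤ M * a :=
    calc a ^ 2 = ⟪f + divy, ι (u - v)⟫ + ⟪y - grad v, grad (u - v)⟫ :=
          norm_grad_sub_sq_eq_inner_add_inner hweak hIBP v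
      _ ≤ ‖f + divy‖ * ‖ι (u - v)‖ + ‖y - grad v‖ * a :=
          add_le_add (real_inner_le_norm _ _) (real_inner_le_norm _ _)
      _ ≤ ‖f + divy‖ * (CF * a) + ‖y - grad v‖ * a := by
          gcongr
          exact hFried (u - v)
      _ = M * a := by ring
  -- `M² - a² = (M - a)² + 2 (M a - a²)`
  nlinarith [sq_nonneg (M - a)]

end Poisson

theorem two_sided_bound_consistency_general
    {V L Ld : Type*}
    [NormedAddCommGroup L] [InnerProductSpace ℝ L]
    [NormedAddCommGroup Ld] [InnerProductSpace ℝ Ld]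
    [AddCommGroup V] [Module ℝ V]
    (ι : V →ₗ[ℝ] L) (grad : V →ₗ[ℝ] Ld)
    (f : L) (u v w : V) (y : Ld) (divy : L) (CF : ℝ)
    (hFried : ∀ z : V, ‖ι z‖ ≤ CF * ‖grad z‖)
    (hweak : ∀ η : V, ⟪grad u, grad η⟫ = ⟪f, ι η⟫)
    (hIBP : ∀ z : V, ⟪divy, ι z⟫ + ⟪y, grad z⟫ = 0) :
    2 * ((⟪f, ι w⟫ - (1 / 2) * ‖grad w‖ ^ 2)
        - (⟪f, ι v⟫ - (1 / 2) * ‖grad v‖ ^ 2))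
      ≤ (‖y - grad v‖ + CF * ‖f + divy‖) ^ 2 ∧
    2 * ((⟪f, ι w⟫ - (1 / 2) * ‖grad w‖ ^ 2)
        - (⟪f, ι v⟫ - (1 / 2) * ‖grad v‖ ^ 2))
      ≤ ‖grad (u - v)‖ ^ 2 ∧
    ‖grad (u - v)‖ ^ 2 ≤ (‖y - grad v‖ + CF * ‖f + divy‖) ^ 2 := by
  have hmin : 2 * (energy ι grad f w - energy ι grad f v) ≤ ‖grad (u - v)‖ ^ 2 :=
    two_mul_energy_sub_le_norm_grad_sub_sq hweak v w
  have hmaj := norm_grad_sub_sq_le_majorant hweak hIBP hFried v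
  exact ⟨hmin.trans hmaj, hmin, hmaj⟩

/-- Two-sided bound consistency for the Poisson problem `-Δu = f`: for any
`v, w ∈ H¹₀(Ω)` and `y ∈ H(Ω,div)`, the minorant `2(J(w) - J(v))` never exceeds the
majorant `(‖y - ∇v‖_Ω + C_F‖f + div y‖_Ω)²`, and the true error `‖∇(u-v)‖²_Ω` lies
in the interval `[2(J(w) - J(v)), (‖y - ∇v‖_Ω + C_F‖f + div y‖_Ω)²]`. -/
theorem two_sided_bound_consistency
    {V L Ld : Type*}
    [NormedAddCommGroup L] [InnerProductSpace ℝ L]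
    [NormedAddCommGroup Ld] [InnerProductSpace ℝ Ld]
    [AddCommGroup V] [Module ℝ V]
    (ι : V →ₗ[ℝ] L) (grad : V →ₗ[ℝ] Ld)
    (f : L) (u v w : V) (y : Ld) (divy : L) (CF : ℝ) (hCF : 0 < CF)
    (hFried : ∀ z : V, ‖ι z‖ ≤ CF * ‖grad z‖)
    (hweak : ∀ η : V, ⟪grad u, grad η⟫ = ⟪f, ι η⟫)
    (hIBP : ∀ z : V, ⟪divy, ι z⟫ + ⟪y, grad z⟫ = 0) :
    2 * ((⟪f, ι w⟫ - (1 / 2) * ‖grad w‖ ^ 2)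
        - (⟪f, ι v⟫ - (1 / 2) * ‖grad v‖ ^ 2))
      ≤ (‖y - grad v‖ + CF * ‖f + divy‖) ^ 2 ∧
    2 * ((⟪f, ι w⟫ - (1 / 2) * ‖grad w‖ ^ 2)
        - (⟪f, ι v⟫ - (1 / 2) * ‖grad v‖ ^ 2))
      ≤ ‖grad (u - v)‖ ^ 2 ∧
    ‖grad (u - v)‖ ^ 2 ≤ (‖y - grad v‖ + CF * ‖f + divy‖) ^ 2 :=
  two_sided_bound_consistency_general ι grad f u v w y divy CF hFried hweak hIBP
end
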